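/- Let K ⊆ ℝ^d be compact, α ∈ (0,1), n ≥ 1, and k an integer with αk > d + n. Let F : K → ℝ^{k×n} be α-Hölder with each F_x injective. Then there exists a ∈ ℝ^{k-1} (in fact almost every a) such that the map x ↦ P_a ∘ F_x takes values in injective linear maps ℝ^n → ℝ^{k-1}, where P_a(y) = (y_1 - a_1 y_k, ..., y_{k-1} - a_{k-1} y_k). In particular, as long as k - 1 ≥ ⌈(d+n)/α⌉, the reduction can be iterated, so there exists a linear surjection Q : ℝ^k → ℝ^{⌊(d+n)/α⌋} (obtained as a composition of maps P_a) such that Q ∘ F_x is injective for all x ∈ K. -/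

import Mathlib

/-!
If `P_a ∘ F_x` is not injective, some `u ≠ 0` has `w = F_x u ≠ 0` in `ker P_a = ℝ • (a, 1)`, so
`w_k ≠ 0` and `a = (w_1 / w_k, …, w_{k-1} / w_k)`. Rescaling `u` so that one of its coordinates is
`1`, every such `a` is the value at a point of `K × ℝ^{n-1}` of a map that is locally `α`-Hölder
(`F` is `α`-Hölder, the identity is `α`-Hölder at small scales since `α ≤ 1`, and the ratio is
smooth where `w_k ≠ 0`). Hence the bad parameters have Hausdorff dimension at most
`(d + n - 1) / α < k - 1`, and their complement is dense in `ℝ^{k-1}`.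

Each `P_a` is surjective and `x ↦ P_a ∘ F_x` is again `α`-Hölder with injective values, so the
reduction can be repeated while the target dimension `p` satisfies `d + n - 1 < α p`, which is the
case down to `p = ⌊(d + n) / α⌋`.
-/

open Set Filter Topology Module
open scoped NNReal ENNReal Matrix

theorem holderWith_of_dist_le {X Y : Type*} [PseudoMetricSpace X] [PseudoMetricSpace Y]
    {f : X → Y} {C r : ℝ} (hr : 0 ≤ r) (h : ∀ x y, dist (f x) (f y) ≤ C * dist x y ^ r) :
    HolderWith C.toNNReal r.toNNReal f := by
  intro x y
  rw [edist_dist, edist_dist, Real.coe_toNNReal r hr,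
    ENNReal.ofReal_rpow_of_nonneg dist_nonneg hr, ← ENNReal.ofReal.eq_def,
    ← ENNReal.ofReal_mul' (by positivity)]
  exact ENNReal.ofReal_le_ofReal (h x y)

theorem HolderOnWith.prodMap {X X' Y Y' : Type*} [PseudoEMetricSpace X] [PseudoEMetricSpace X']
    [PseudoEMetricSpace Y] [PseudoEMetricSpace Y'] {Cf Cg r : ℝ≥0} {f : X → Y} {g : X' → Y'}
    {s : Set X} {t : Set X'} (hf : HolderOnWith Cf r f s) (hg : HolderOnWith Cg r g t) :
    HolderOnWith (max Cf Cg) r (Prod.map f g) (s ×ˢ t) := by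
  rintro ⟨x, x'⟩ ⟨hx, hx'⟩ ⟨y, y'⟩ ⟨hy, hy'⟩
  simp only [Prod.map, Prod.edist_eq]
  refine max_le ((hf x hx y hy).trans ?_) ((hg x' hx' y' hy').trans ?_) <;> gcongr
  exacts [le_max_left _ _, le_max_left _ _, le_max_right _ _, le_max_right _ _]

theorem LipschitzWith.holderOnWith_ball {X Y : Type*} [PseudoMetricSpace X] [PseudoMetricSpace Y]
    {L r : ℝ≥0} {f : X → Y} (hf : LipschitzWith L f) (hr : r ≤ 1) (x : X) :
    HolderOnWith L r f (Metric.ball x 2⁻¹) := by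
  have hdiam : ∀ y ∈ Metric.ball x 2⁻¹, ∀ z ∈ Metric.ball x 2⁻¹, edist y z ≤ (1 : ℝ≥0) := by
    intro y hy z hz
    rw [edist_dist, ENNReal.coe_one, ENNReal.ofReal_le_one]
    linarith [dist_triangle_right y z x, Metric.mem_ball.1 hy, Metric.mem_ball.1 hz]
  simpa using (hf.holderWith.holderOnWith _).of_le hdiam hr

theorem ContDiffAt.exists_holderOnWith_comp {X E F : Type*} [PseudoEMetricSpace X]
    [NormedAddCommGroup E] [NormedSpace ℝ E] [NormedAddCommGroup F] [NormedSpace ℝ F]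
    {g : E → F} {ψ : X → E} {p : X} {C r : ℝ≥0} {t : Set X} (hr : 0 < r)
    (hg : ContDiffAt ℝ 1 g (ψ p)) (ht : t ∈ 𝓝 p) (hψ : HolderOnWith C r ψ t) :
    ∃ C', ∃ t' ∈ 𝓝 p, HolderOnWith C' r (g ∘ ψ) t' := by
  obtain ⟨L, u, hu, hgL⟩ := hg.exists_lipschitzOnWith
  have hψp : ContinuousAt ψ p := (hψ.continuousOn hr).continuousAt ht
  have hcomp := hgL.holderOnWith.comp (hψ.mono (inter_subset_left (t := ψ ⁻¹' u)))
    fun x hx => hx.2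
  rw [one_mul] at hcomp
  exact ⟨_, _, inter_mem ht (hψp hu), hcomp⟩

theorem Fin.isometry_insertNth {α : Type*} [PseudoMetricSpace α] {m : ℕ} (j : Fin (m + 1))
    (c : α) : Isometry (Fin.insertNth (α := fun _ => α) j c) :=
  Isometry.of_dist_eq fun z z' => by simp [Fin.dist_insertNth_insertNth]

theorem dimH_univ_subtype_prod_le {E : Type*} [NormedAddCommGroup E] [NormedSpace ℝ E]
    [FiniteDimensional ℝ E] (K : Set E) (m : ℕ) :
    dimH (univ : Set (K × (Fin m → ℝ))) ≤ finrank ℝ E + m := by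
  have hiso : Isometry (Prod.map ((↑) : K → E) (id : (Fin m → ℝ) → (Fin m → ℝ))) :=
    isometry_subtype_coe.prodMap isometry_id
  rw [← hiso.dimH_image]
  refine (dimH_mono (subset_univ _)).trans_eq ?_
  rw [Real.dimH_univ_eq_finrank, Module.finrank_prod, Module.finrank_fin_fun]
  norm_cast

section Whitney

variable {k : ℕ}

/-- The map `P_a : y ↦ (y_i - a_i y_k)_{i < k}` of the paper, with `Fin (k + 1)` indexing `ℝ^k`
and `Fin k` indexing `ℝ^{k-1}`. It acts on vectors (`V = ℝ`) and on the rows of a matrix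
(`V = ℝ^n`). -/
def whitneyProj {V : Type*} [AddCommGroup V] [Module ℝ V] (a : Fin k → ℝ) :
    (Fin (k + 1) → V) →ₗ[ℝ] (Fin k → V) :=
  LinearMap.pi fun i => LinearMap.proj i.castSucc - a i • LinearMap.proj (Fin.last k)

@[simp]
theorem whitneyProj_apply {V : Type*} [AddCommGroup V] [Module ℝ V] (a : Fin k → ℝ)
    (y : Fin (k + 1) → V) (i : Fin k) :
    whitneyProj a y i = y i.castSucc - a i • y (Fin.last k) :=
  rfl

theorem whitneyProj_surjective {V : Type*} [AddCommGroup V] [Module ℝ V] (a : Fin k → ℝ) :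
    Function.Surjective (whitneyProj (V := V) a) :=
  fun z => ⟨Fin.snoc z 0, by ext i; simp⟩

theorem mulVec_of_whitneyProj {n : ℕ} (a : Fin k → ℝ) (M : Fin (k + 1) → Fin n → ℝ) :
    (Matrix.of (whitneyProj a M)).mulVec = whitneyProj a ∘ (Matrix.of M).mulVec := by
  ext v i
  simp [Matrix.mulVec, dotProduct, sub_mul, Finset.sum_sub_distrib, Finset.mul_sum, mul_assoc]

noncomputable def whitneyRatio (w : Fin (k + 1) → ℝ) : Fin k → ℝ :=
  fun i => w i.castSucc / w (Fin.last k)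

theorem whitneyRatio_smul {c : ℝ} (hc : c ≠ 0) (w : Fin (k + 1) → ℝ) :
    whitneyRatio (c • w) = whitneyRatio w :=
  funext fun _ => mul_div_mul_left _ _ hc

theorem whitneyRatio_eq_of_whitneyProj_eq_zero {a : Fin k → ℝ} {w : Fin (k + 1) → ℝ}
    (h : whitneyProj a w = 0) (hw : w ≠ 0) : w (Fin.last k) ≠ 0 ∧ whitneyRatio w = a := by
  have hcoord : ∀ i, w i.castSucc = a i * w (Fin.last k) := fun i => by
    simpa [sub_eq_zero] using congrFun h i
  have hlast : w (Fin.last k) ≠ 0 := fun h0 =>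
    hw <| funext <| Fin.lastCases h0 fun _ => by simp [hcoord, h0]
  exact ⟨hlast, funext fun i => by simp [whitneyRatio, hcoord, hlast]⟩

theorem exists_whitneyRatio_mulVec_insertNth_eq {m : ℕ}
    {M : Matrix (Fin (k + 1)) (Fin (m + 1)) ℝ} (hM : Function.Injective M.mulVec)
    {a : Fin k → ℝ} (ha : ¬ Function.Injective (whitneyProj a ∘ M.mulVec)) :
    ∃ j z, (M *ᵥ Fin.insertNth j 1 z) (Fin.last k) ≠ 0 ∧
      whitneyRatio (M *ᵥ Fin.insertNth j 1 z) = a := by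
  obtain ⟨v, hv, hv0⟩ : ∃ v, whitneyProj a (M *ᵥ v) = 0 ∧ v ≠ 0 := by
    simpa using mt (injective_iff_map_eq_zero (whitneyProj a ∘ₗ M.mulVecLin)).2 ha
  obtain ⟨j, hj⟩ := Function.ne_iff.1 hv0
  have hw : M *ᵥ v ≠ 0 := by simpa using hM.ne hv0
  obtain ⟨hlast, hratio⟩ := whitneyRatio_eq_of_whitneyProj_eq_zero hv hw
  have hu : Fin.insertNth j 1 (Fin.removeNth j ((v j)⁻¹ • v)) = (v j)⁻¹ • v := by
    simp [inv_mul_cancel₀ hj]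
  refine ⟨j, Fin.removeNth j ((v j)⁻¹ • v), ?_⟩
  rw [hu, Matrix.mulVec_smul, whitneyRatio_smul (inv_ne_zero hj)]
  exact ⟨by simpa using ⟨hj, hlast⟩, hratio⟩

theorem contDiffAt_whitneyRatio_mulVec {n : ℕ} {M : Fin (k + 1) → Fin n → ℝ} {u : Fin n → ℝ}
    (h : (Matrix.of M *ᵥ u) (Fin.last k) ≠ 0) :
    ContDiffAt ℝ 1 (fun q : (Fin (k + 1) → Fin n → ℝ) × (Fin n → ℝ) =>
      whitneyRatio (Matrix.of q.1 *ᵥ q.2)) (M, u) := by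
  have hmulVec : ∀ i, ContDiff ℝ 1 fun q : (Fin (k + 1) → Fin n → ℝ) × (Fin n → ℝ) =>
      (Matrix.of q.1 *ᵥ q.2) i := by
    intro i
    simp only [Matrix.mulVec, dotProduct, Matrix.of_apply]
    fun_prop
  exact contDiffAt_pi.2 fun i => (hmulVec _).contDiffAt.div (hmulVec _).contDiffAt h

theorem HolderWith.exists_holderOnWith_whitneyRatio_mulVec_insertNth {X : Type*}
    [PseudoMetricSpace X] {m : ℕ} {F : X → Fin (k + 1) → Fin (m + 1) → ℝ} {C r : ℝ≥0}
    (hF : HolderWith C r F) (hr0 : 0 < r) (hr1 : r ≤ 1) (j : Fin (m + 1))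
    {p : X × (Fin m → ℝ)} (hp : (Matrix.of (F p.1) *ᵥ Fin.insertNth j 1 p.2) (Fin.last k) ≠ 0) :
    ∃ C', ∃ t ∈ 𝓝 p, HolderOnWith C' r
      (fun q : X × (Fin m → ℝ) => whitneyRatio (Matrix.of (F q.1) *ᵥ Fin.insertNth j 1 q.2)) t :=
  ContDiffAt.exists_holderOnWith_comp (ψ := Prod.map F (Fin.insertNth j 1)) hr0
    (contDiffAt_whitneyRatio_mulVec hp)
    (prod_mem_nhds univ_mem (Metric.ball_mem_nhds p.2 (by norm_num)))
    ((hF.holderOnWith univ).prodMap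
      ((Fin.isometry_insertNth j (1 : ℝ)).lipschitz.holderOnWith_ball hr1 p.2))

variable {E : Type*} [NormedAddCommGroup E] [NormedSpace ℝ E] [FiniteDimensional ℝ E]
  {K : Set E} {m : ℕ} {α : ℝ≥0}

theorem dense_setOf_forall_injective_whitneyProj_comp {F : K → Fin (k + 1) → Fin (m + 1) → ℝ}
    {C : ℝ≥0} (hF : HolderWith C α F) (hα0 : 0 < α) (hα1 : α ≤ 1)
    (hk : (finrank ℝ E + m : ℝ) < α * k)
    (hFinj : ∀ x, Function.Injective (Matrix.of (F x)).mulVec) :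
    Dense {a | ∀ x, Function.Injective (whitneyProj a ∘ (Matrix.of (F x)).mulVec)} := by
  set Φ : Fin (m + 1) → K × (Fin m → ℝ) → Fin k → ℝ :=
    fun j q => whitneyRatio (Matrix.of (F q.1) *ᵥ Fin.insertNth j 1 q.2)
  set S : Fin (m + 1) → Set (K × (Fin m → ℝ)) :=
    fun j => {q | (Matrix.of (F q.1) *ᵥ Fin.insertNth j 1 q.2) (Fin.last k) ≠ 0}
  have hbad : {a | ∀ x, Function.Injective (whitneyProj a ∘ (Matrix.of (F x)).mulVec)}ᶜ ⊆
      ⋃ j, Φ j '' S j := by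
    intro a ha
    obtain ⟨x, hx⟩ := not_forall.1 ha
    obtain ⟨j, z, hz, hza⟩ := exists_whitneyRatio_mulVec_insertNth_eq (hFinj x) hx
    exact mem_iUnion.2 ⟨j, (x, z), hz, hza⟩
  have hdim : ∀ j, dimH (Φ j '' S j) ≤ (finrank ℝ E + m) / α := fun j =>
    (dimH_image_le_of_locally_holder_on hα0 fun p hp =>
      let ⟨C', t, ht, hC'⟩ := hF.exists_holderOnWith_whitneyRatio_mulVec_insertNth hα0 hα1 j hp
      ⟨C', t, mem_nhdsWithin_of_mem_nhds ht, hC'⟩).trans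
    (by gcongr; exact (dimH_mono (subset_univ _)).trans (dimH_univ_subtype_prod_le K m))
  have hlt : (finrank ℝ E + m : ℝ≥0∞) / α < finrank ℝ (Fin k → ℝ) := by
    rw [Module.finrank_fin_fun, ENNReal.div_lt_iff (Or.inl (by exact_mod_cast hα0.ne'))
      (Or.inl ENNReal.coe_ne_top)]
    exact_mod_cast (by linarith : (finrank ℝ E + m : ℝ) < k * α)
  rw [← compl_compl {a | _}]
  refine dense_compl_of_dimH_lt_finrank ((dimH_mono hbad).trans_lt ?_)
  rw [dimH_iUnion]
  exact (iSup_le hdim).trans_lt hlt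

theorem exists_surjective_comp_injective_of_holderWith {p : ℕ} (hα0 : 0 < α) (hα1 : α ≤ 1)
    (hp : (finrank ℝ E + m : ℝ) < α * p) (k : ℕ) (hpk : p ≤ k) {C : ℝ≥0}
    {F : K → Fin k → Fin (m + 1) → ℝ} (hF : HolderWith C α F)
    (hFinj : ∀ x, Function.Injective (Matrix.of (F x)).mulVec) :
    ∃ Q : (Fin k → ℝ) →ₗ[ℝ] (Fin p → ℝ), Function.Surjective Q ∧
      ∀ x, Function.Injective (Q ∘ (Matrix.of (F x)).mulVec) := by
  induction k, hpk using Nat.le_induction generalizing C with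
  | base => exact ⟨LinearMap.id, Function.surjective_id, hFinj⟩
  | succ k hpk ih =>
    obtain ⟨a, ha⟩ := (dense_setOf_forall_injective_whitneyProj_comp hF hα0 hα1
      (hp.trans_le (by gcongr)) hFinj).nonempty
    have hF' := (whitneyProj a).toContinuousLinearMap.lipschitz.holderWith.comp hF
    rw [one_mul] at hF'
    obtain ⟨Q, hQ, hQinj⟩ := ih hF' fun x => by
      simpa only [Function.comp_def, LinearMap.coe_toContinuousLinearMap', mulVec_of_whitneyProj]
        using ha x
    refine ⟨Q ∘ₗ whitneyProj a, hQ.comp (whitneyProj_surjective a), fun x => ?_⟩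
    simpa only [Function.comp_def, LinearMap.coe_toContinuousLinearMap', mulVec_of_whitneyProj,
      LinearMap.comp_apply] using hQinj x

end Whitney

/-- Iterated Whitney reduction: if `F : K → ℝ^{k×n}` is `α`-Hölder with each `F_x`
injective and `αk > d + n`, then (i) there exists `a ∈ ℝ^{k-1}` such that `P_a ∘ F_x` is
injective for all `x ∈ K`, and (ii) there exists a linear surjection
`Q : ℝ^k → ℝ^⌊(d+n)/α⌋` such that `Q ∘ F_x` is injective for all `x ∈ K`. -/
theorem stmt16 (d n k : ℕ) (hn : 1 ≤ n) (α C : ℝ) (hα : 0 < α) (hα1 : α < 1)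
    (hk : (d + n : ℝ) < α * k)
    (K : Set (Fin d → ℝ))
    (F : K → (Fin k → Fin n → ℝ))
    (hF : ∀ x y : K, dist (F x) (F y) ≤ C * dist x y ^ α)
    (hFinj : ∀ x : K, Function.Injective fun v => (Matrix.of (F x)).mulVec v) :
    (∃ a : Fin (k - 1) → ℝ, ∀ x : K,
      Function.Injective (fun v : Fin n → ℝ => fun i : Fin (k - 1) =>
        (Matrix.of (F x)).mulVec v (Fin.castLE (Nat.sub_le k 1) i)
          - a i * (Matrix.of (F x)).mulVec v ⟨k - 1, by
            have h0 : (0 : ℝ) < α * k := lt_of_le_of_lt (by positivity) hk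
            have hk0 : k ≠ 0 := by rintro rfl; simp at h0
            omega⟩)) ∧
    (∃ Q : (Fin k → ℝ) →ₗ[ℝ] (Fin (Nat.floor ((d + n : ℝ) / α)) → ℝ),
      Function.Surjective Q ∧
      ∀ x : K, Function.Injective (⇑Q ∘ fun v : Fin n → ℝ =>
        (Matrix.of (F x)).mulVec v)) := by
  obtain ⟨m, rfl⟩ := Nat.exists_eq_add_one_of_ne_zero (by omega : n ≠ 0)
  obtain ⟨k, rfl⟩ := Nat.exists_eq_add_one_of_ne_zero (n := k) (by
    rintro rfl; norm_num at hk; linarith)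
  have hHolder := holderWith_of_dist_le hα.le hF
  have hα0 : 0 < α.toNNReal := Real.toNNReal_pos.2 hα
  have hα1' : α.toNNReal ≤ 1 := Real.toNNReal_le_one.2 hα1.le
  have hrank : (finrank ℝ (Fin d → ℝ) : ℝ) = d := by rw [Module.finrank_fin_fun]
  have hp := Nat.lt_floor_add_one ((d + (m + 1 : ℕ) : ℝ) / α)
  set p := ⌊(d + (m + 1 : ℕ) : ℝ) / α⌋₊
  rw [div_lt_iff₀' hα, Nat.cast_succ] at hp
  rw [Nat.cast_succ, Nat.cast_succ] at hk
  refine ⟨?_, ?_⟩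
  · obtain ⟨a, ha⟩ := (dense_setOf_forall_injective_whitneyProj_comp hHolder hα0 hα1'
      (by rw [hrank, Real.coe_toNNReal α hα.le]; linarith) hFinj).nonempty
    exact ⟨a, ha⟩
  · exact exists_surjective_comp_injective_of_holderWith hα0 hα1'
      (by rw [hrank, Real.coe_toNNReal α hα.le]; linarith) _
      (Nat.floor_le_of_le (by rw [div_le_iff₀' hα]; push_cast; linarith)) hHolder hFinj
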